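/- arXiv:math/0402440 — 4 statements merged into one kernel-verified Lean document; each statement's English description precedes it below -/
import Mathlib

section
/- Let g be a 2-step nilpotent Lie algebra with abelian complex structure and complex one-dimensional center c^{1,0} spanned by W. Define ∂̄ on g^{1,0} by ∂̄_{B̄} A = [B̄, A]^{1,0}, extend to the exterior algebra f generated by g^{*(0,1)} ⊕ g^{1,0} as an anti-derivation together with the ∂̄-operator on (0,q)-forms. Then ∂̄ ∘ ∂̄ = 0 on all of f; in particular ∂̄² Ξ = 0 for every polyvector Ξ ∈ g^{p,0}. -/
/-!
Call `x` signed-Leibniz with sign `s` if `D (x * y) = D x * y + s • (x * D y)` for all `y`;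
degree-one generators have sign `-1`. If `x` and `y` have signs `s`, `s'`, the product has
sign `s * s'`, and if moreover `D x`, `D y` have the opposite signs and `D² x = D² y = 0`, then
`D² (x * y) = (-s + s) • (D x * D y) = 0`. So it suffices that `D` of every generator has sign `+1`
and is `D`-closed, which holds since `D T_j` is a combination of the products `ω̄^k ∧ W` of
`D`-closed generators. Linearity of `D` extends `D² = 0` from monomials to the whole algebra.
-/

section SignedLeibniz

variable {R A : Type*} [CommRing R] [Ring A] [Algebra R A] {D : A →ₗ[R] A}

def IsSignedLeibniz (D : A →ₗ[R] A) (s : R) (x : A) : Prop :=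
  ∀ y, D (x * y) = D x * y + s • (x * D y)

namespace IsSignedLeibniz

lemma zero (s : R) : IsSignedLeibniz D s 0 := fun y => by simp

lemma one (hD1 : D 1 = 0) : IsSignedLeibniz D 1 1 := fun y => by simp [hD1]

lemma add {s : R} {x x' : A} (hx : IsSignedLeibniz D s x) (hx' : IsSignedLeibniz D s x') :
    IsSignedLeibniz D s (x + x') := fun y => by
  simp only [add_mul, map_add, hx y, hx' y, smul_add]
  abel

lemma smul {s : R} {x : A} (c : R) (hx : IsSignedLeibniz D s x) :
    IsSignedLeibniz D s (c • x) := fun y => by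
  rw [smul_mul_assoc, map_smul, hx y, map_smul, smul_add, smul_mul_assoc, smul_comm c s,
    smul_mul_assoc]

lemma sum {s : R} {ι : Type*} {t : Finset ι} {f : ι → A}
    (h : ∀ i ∈ t, IsSignedLeibniz D s (f i)) : IsSignedLeibniz D s (∑ i ∈ t, f i) := by
  classical
  induction t using Finset.induction_on with
  | empty => simpa using zero s
  | insert a t hat ih =>
    rw [Finset.sum_insert hat]
    exact (h a (t.mem_insert_self a)).add (ih fun i hi => h i (Finset.mem_insert_of_mem hi))

lemma mul {s s' : R} {x y : A} (hx : IsSignedLeibniz D s x) (hy : IsSignedLeibniz D s' y) :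
    IsSignedLeibniz D (s * s') (x * y) := fun z =>
  calc D (x * y * z) = D x * (y * z) + s • (x * D (y * z)) := by rw [mul_assoc, hx]
    _ = D x * (y * z) + s • (x * (D y * z + s' • (y * D z))) := by rw [hy z]
    _ = D (x * y) * z + (s * s') • (x * y * D z) := by
        rw [hx y]
        simp only [mul_add, smul_add, add_mul, smul_mul_assoc, mul_smul_comm, mul_assoc,
          smul_smul]
        abel

lemma map_mul_eq_zero {s : R} {x y : A} (hx : IsSignedLeibniz D s x) (hDx : D x = 0)
    (hDy : D y = 0) : D (x * y) = 0 := by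
  rw [hx y, hDx, hDy, zero_mul, mul_zero, smul_zero, add_zero]

end IsSignedLeibniz

def IsSquareZeroLeibniz (D : A →ₗ[R] A) (s : R) (x : A) : Prop :=
  IsSignedLeibniz D s x ∧ IsSignedLeibniz D (-s) (D x) ∧ D (D x) = 0

namespace IsSquareZeroLeibniz

lemma of_map_eq_sum {s : R} {x : A} {ι : Type*} {t : Finset ι} {c : ι → R} {y : ι → A}
    (hx : IsSignedLeibniz D s x) (hDx : D x = ∑ i ∈ t, c i • y i)
    (hy : ∀ i ∈ t, IsSignedLeibniz D (-s) (y i) ∧ D (y i) = 0) :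
    IsSquareZeroLeibniz D s x := by
  refine ⟨hx, hDx ▸ IsSignedLeibniz.sum fun i hi => (hy i hi).1.smul (c i), ?_⟩
  rw [hDx, map_sum]
  exact Finset.sum_eq_zero fun i hi => by rw [map_smul, (hy i hi).2, smul_zero]

lemma of_map_eq_zero {s : R} {x : A} (hx : IsSignedLeibniz D s x) (hDx : D x = 0) :
    IsSquareZeroLeibniz D s x :=
  ⟨hx, hDx ▸ .zero _, by rw [hDx, map_zero]⟩

lemma mul {s s' : R} {x y : A} (hx : IsSquareZeroLeibniz D s x)
    (hy : IsSquareZeroLeibniz D s' y) : IsSquareZeroLeibniz D (s * s') (x * y) := by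
  obtain ⟨hxL, hDxL, hDDx⟩ := hx
  obtain ⟨hyL, hDyL, hDDy⟩ := hy
  refine ⟨hxL.mul hyL, ?_, ?_⟩ <;> rw [hxL y]
  · refine .add (by simpa using hDxL.mul hyL) ?_
    simpa using (hxL.mul hDyL).smul s
  · rw [map_add, map_smul, hDxL y, hxL (D y), hDDx, hDDy]
    simp

end IsSquareZeroLeibniz

theorem map_map_eq_zero_of_mem_adjoin {S : Set A} (hD1 : D 1 = 0)
    (hS : ∀ g ∈ S, ∃ s, IsSquareZeroLeibniz D s g) :
    ∀ x ∈ Algebra.adjoin R S, D (D x) = 0 := by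
  have hmonomial : ∀ m ∈ Submonoid.closure S, ∃ s, IsSquareZeroLeibniz D s m := by
    intro m hm
    induction hm using Submonoid.closure_induction with
    | mem g hg => exact hS g hg
    | one => exact ⟨1, .of_map_eq_zero (.one hD1) hD1⟩
    | mul x y _ _ hx hy =>
      obtain ⟨s, hx⟩ := hx
      obtain ⟨s', hy⟩ := hy
      exact ⟨s * s', hx.mul hy⟩
  intro x hx
  replace hx : x ∈ Submodule.span R (Submonoid.closure S : Set A) := by
    rwa [← Algebra.adjoin_eq_span]
  induction hx using Submodule.span_induction with
  | mem m hm => exact (hmonomial m hm).choose_spec.2.2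
  | zero => simp
  | add a b _ _ ha hb => rw [map_add, map_add, ha, hb, add_zero]
  | smul c a _ ha => rw [map_smul, map_smul, ha, smul_zero]

end SignedLeibniz

theorem stmt7_general {F : Type*} [Ring F] [Algebra ℂ F] {n : ℕ}
    (T : Fin n → F) (W : F) (ω : Fin n → F) (ρ : F)
    (E : Fin n → Fin n → ℂ)
    (D : F →ₗ[ℂ] F)
    (gens : Set F)
    (hgens : gens = Set.range T ∪ Set.range ω ∪ {W, ρ})
    -- `D` is an anti-derivation with respect to the degree-one generators
    (hder : ∀ g ∈ gens, ∀ y : F, D (g * y) = D g * y - g * D y)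
    (hD1 : D 1 = 0)
    (hDW : D W = 0)
    (hDT : ∀ j, D (T j) = ∑ k, E k j • (ω k * W))
    (hDω : ∀ k, D (ω k) = 0)
    (hDρ : D ρ = 0) :
    ∀ x ∈ Algebra.adjoin ℂ gens, D (D x) = 0 := by
  have hgen : ∀ g ∈ gens, IsSignedLeibniz D (-1) g := fun g hg y => by
    rw [hder g hg y, neg_one_smul, sub_eq_add_neg]
  subst hgens
  have hωW : ∀ k, IsSignedLeibniz D (-(-1)) (ω k * W) ∧ D (ω k * W) = 0 := fun k =>
    have hω := hgen (ω k) (by simp)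
    ⟨by simpa using hω.mul (hgen W (by simp)), hω.map_mul_eq_zero (hDω k) hDW⟩
  refine map_map_eq_zero_of_mem_adjoin hD1 fun g hg => ⟨-1, ?_⟩
  obtain (⟨j, rfl⟩ | ⟨k, rfl⟩) | rfl | rfl := hg
  · exact .of_map_eq_sum (hgen _ (by simp)) (hDT j) fun k _ => hωW k
  · exact .of_map_eq_zero (hgen _ (by simp)) (hDω k)
  · exact .of_map_eq_zero (hgen _ (by simp)) hDW
  · exact .of_map_eq_zero (hgen _ (by simp)) hDρ

/-- Let `f` be the (exterior) algebra generated by degree-one elements: the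
`(1,0)`-vectors `T_j`, the central vector `W` spanning `c^{1,0}`, the `(0,1)`-forms
`ω̄^k` and the central `(0,1)`-form `ρ̄`.  Let `D = ∂̄` be the anti-derivation with
`D W = 0`, `D T_j = Σ_k E_{kj} ω̄^k ∧ W`, and `D = 0` on the `(0,1)`-forms.
Then `D ∘ D = 0` on all of `f`, i.e. on the subalgebra generated by the generators;
in particular `D² Ξ = 0` for every polyvector `Ξ`. -/
theorem stmt7 {F : Type*} [Ring F] [Algebra ℂ F] {n : ℕ}
    (T : Fin n → F) (W : F) (ω : Fin n → F) (ρ : F)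
    (E : Fin n → Fin n → ℂ)
    (D : F →ₗ[ℂ] F)
    (gens : Set F)
    (hgens : gens = Set.range T ∪ Set.range ω ∪ {W, ρ})
    -- degree-one generators anticommute
    (hanti : ∀ g ∈ gens, ∀ g' ∈ gens, g * g' = -(g' * g))
    -- `D` is an anti-derivation with respect to the degree-one generators
    (hder : ∀ g ∈ gens, ∀ y : F, D (g * y) = D g * y - g * D y)
    (hD1 : D 1 = 0)
    (hDW : D W = 0)
    (hDT : ∀ j, D (T j) = ∑ k, E k j • (ω k * W))
    (hDω : ∀ k, D (ω k) = 0)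
    (hDρ : D ρ = 0) :
    ∀ x ∈ Algebra.adjoin ℂ gens, D (D x) = 0 :=
  stmt7_general T W ω ρ E D gens hgens hder hD1 hDW hDT hDω hDρ
end

section
/- The induced odd Lie superalgebra structure on the cohomology h of the DGA of the Kodaira surface is abelian: for any two harmonic representatives a, b from the list {1, ω̄, ρ̄, ω̄∧ρ̄, W, ω̄∧T, ρ̄∧W, ρ̄∧T∧W, T∧W, ω̄∧T∧W, ω̄∧ρ̄∧T, ω̄∧ρ̄∧T∧W}, the Schouten bracket [a,b] is ∂̄-exact; in particular [ρ̄, T∧W] = -∂̄T and [ρ̄, ρ̄∧T∧W] = -∂̄(T∧ρ̄), and all other brackets of listed representatives vanish identically. -/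
/-- A (differential) Gerstenhaber algebra structure on a `ℂ`-algebra `F` whose
multiplication plays the role of the wedge product: an `ℕ`-grading `gr`, an odd
Schouten bracket `br` and a differential `D` satisfying the axioms (L1)-(L3),
(C1)-(C3) and (D1)-(D4) in their sign-explicit forms. -/
structure GA (F : Type*) [Ring F] [Algebra ℂ F] where
  gr : ℕ → Submodule ℂ F
  br : F →ₗ[ℂ] F →ₗ[ℂ] F
  D : F →ₗ[ℂ] F
  one_mem : (1 : F) ∈ gr 0
  mul_mem : ∀ {i j : ℕ} {a b : F}, a ∈ gr i → b ∈ gr j → a * b ∈ gr (i + j)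
  br_mem : ∀ {i j : ℕ} {a b : F}, a ∈ gr i → b ∈ gr j → br a b ∈ gr (i + j - 1)
  D_mem : ∀ {i : ℕ} {a : F}, a ∈ gr i → D a ∈ gr (i + 1)
  gcomm : ∀ {i j : ℕ} {a b : F}, a ∈ gr i → b ∈ gr j →
    a * b = ((-1 : ℂ) ^ (i * j)) • (b * a)
  br_symm : ∀ {i j : ℕ} {a b : F}, a ∈ gr i → b ∈ gr j →
    br a b = ((-1 : ℂ) ^ (i * j + i + j)) • br b a
  leibniz : ∀ {i j : ℕ} {a b : F} (c : F), a ∈ gr i → b ∈ gr j →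
    br (a * b) c = a * br b c + ((-1 : ℂ) ^ (i * j)) • (b * br a c)
  leibniz' : ∀ {i j : ℕ} {a b : F} (c : F), a ∈ gr i → b ∈ gr j →
    br a (b * c) = br a b * c + ((-1 : ℂ) ^ (j + i * j)) • (b * br a c)
  D_mul : ∀ {i : ℕ} {a : F} (b : F), a ∈ gr i →
    D (a * b) = D a * b + ((-1 : ℂ) ^ i) • (a * D b)
  D_D : ∀ a : F, D (D a) = 0
  D_br : ∀ {i : ℕ} {a : F} (b : F), a ∈ gr i →
    D (br a b) = br (D a) b - ((-1 : ℂ) ^ i) • br a (D b)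

/-- The differential Gerstenhaber algebra of the Kodaira surface: it is generated
as an exterior algebra by the degree-one elements `T, W, ρ̄, ω̄`; the sole nonzero
Schouten bracket among degree-one elements is `[T, ρ̄] = -(i/2) ω̄`, and the
differential is determined by `∂̄T = -(i/2) ω̄∧W` and zero on the other generators. -/
structure KodairaGA (F : Type*) [Ring F] [Algebra ℂ F] extends GA F where
  T : F
  W : F
  ρ : F
  ω : F
  T_mem : T ∈ gr 1
  W_mem : W ∈ gr 1
  ρ_mem : ρ ∈ gr 1
  ω_mem : ω ∈ gr 1
  br_T_ρ : br T ρ = (-(Complex.I)/2) • ω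
  br_T_T : br T T = 0
  br_T_W : br T W = 0
  br_T_ω : br T ω = 0
  br_W_W : br W W = 0
  br_W_ρ : br W ρ = 0
  br_W_ω : br W ω = 0
  br_ρ_ρ : br ρ ρ = 0
  br_ρ_ω : br ρ ω = 0
  br_ω_ω : br ω ω = 0
  D_T : D T = (-(Complex.I)/2) • (ω * W)
  D_W : D W = 0
  D_ρ : D ρ = 0
  D_ω : D ω = 0

/-- The list of harmonic representatives
`1, ω̄, ρ̄, ω̄∧ρ̄, W, ω̄∧T, ρ̄∧W, ρ̄∧T∧W, T∧W, ω̄∧T∧W, ω̄∧ρ̄∧T, ω̄∧ρ̄∧T∧W`. -/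
def reps {F : Type*} [Ring F] [Algebra ℂ F] (K : KodairaGA F) : List F :=
  [1, K.ω, K.ρ, K.ω * K.ρ, K.W, K.ω * K.T, K.ρ * K.W, K.ρ * (K.T * K.W),
    K.T * K.W, K.ω * (K.T * K.W), K.ω * (K.ρ * K.T), K.ω * (K.ρ * (K.T * K.W))]

namespace KodairaGA
variable {F : Type*} [Ring F] [Algebra ℂ F] (K : KodairaGA F)

@[simp] lemma T_mem' : K.T ∈ K.gr 1 := K.T_mem
@[simp] lemma W_mem' : K.W ∈ K.gr 1 := K.W_mem
@[simp] lemma ρ_mem' : K.ρ ∈ K.gr 1 := K.ρ_mem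
@[simp] lemma ω_mem' : K.ω ∈ K.gr 1 := K.ω_mem

@[simp] lemma mTW : K.T * K.W ∈ K.gr 2 := K.mul_mem K.T_mem K.W_mem
@[simp] lemma mρT : K.ρ * K.T ∈ K.gr 2 := K.mul_mem K.ρ_mem K.T_mem
@[simp] lemma mωρ : K.ω * K.ρ ∈ K.gr 2 := K.mul_mem K.ω_mem K.ρ_mem
@[simp] lemma mωT : K.ω * K.T ∈ K.gr 2 := K.mul_mem K.ω_mem K.T_mem
@[simp] lemma mρW : K.ρ * K.W ∈ K.gr 2 := K.mul_mem K.ρ_mem K.W_mem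
@[simp] lemma mρTW : K.ρ * (K.T * K.W) ∈ K.gr 3 := K.mul_mem K.ρ_mem K.mTW
@[simp] lemma mωTW : K.ω * (K.T * K.W) ∈ K.gr 3 := K.mul_mem K.ω_mem K.mTW
@[simp] lemma mωρT : K.ω * (K.ρ * K.T) ∈ K.gr 3 := K.mul_mem K.ω_mem K.mρT
@[simp] lemma mωρTW : K.ω * (K.ρ * (K.T * K.W)) ∈ K.gr 4 := K.mul_mem K.ω_mem K.mρTW

lemma sq_zero {x : F} (hx : x ∈ K.gr 1) : x * x = 0 := by
  have h := K.gcomm hx hx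
  have h2 : x * x + x * x = 0 := by
    nth_rewrite 1 [h]; norm_num
  have h3 : (2 : ℂ) • (x * x) = 0 := by rw [two_smul]; exact h2
  calc x * x = (2 : ℂ)⁻¹ • ((2:ℂ) • (x*x)) := by rw [smul_smul]; norm_num
    _ = 0 := by rw [h3, smul_zero]

lemma anticomm {x y : F} (hx : x ∈ K.gr 1) (hy : y ∈ K.gr 1) : x * y = -(y * x) := by
  have h := K.gcomm hx hy
  simpa using h

@[simp] lemma br_one_left (c : F) : K.br 1 c = 0 := by
  have h := K.leibniz c K.one_mem K.one_mem
  simpa using h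

lemma br_one_right {i : ℕ} {a : F} (ha : a ∈ K.gr i) : K.br a 1 = 0 := by
  have h := K.leibniz' (1:F) ha K.one_mem
  simpa using h

@[simp] lemma r1 : K.br K.ω 1 = 0 := K.br_one_right K.ω_mem
@[simp] lemma r2 : K.br K.ρ 1 = 0 := K.br_one_right K.ρ_mem
@[simp] lemma r3 : K.br K.W 1 = 0 := K.br_one_right K.W_mem
@[simp] lemma r4 : K.br K.T 1 = 0 := K.br_one_right K.T_mem
@[simp] lemma r5 : K.br (K.ω*K.ρ) 1 = 0 := K.br_one_right K.mωρ
@[simp] lemma r6 : K.br (K.ω*K.T) 1 = 0 := K.br_one_right K.mωT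
@[simp] lemma r7 : K.br (K.ρ*K.W) 1 = 0 := K.br_one_right K.mρW
@[simp] lemma r8 : K.br (K.ρ*(K.T*K.W)) 1 = 0 := K.br_one_right K.mρTW
@[simp] lemma r9 : K.br (K.T*K.W) 1 = 0 := K.br_one_right K.mTW
@[simp] lemma r10 : K.br (K.ω*(K.T*K.W)) 1 = 0 := K.br_one_right K.mωTW
@[simp] lemma r11 : K.br (K.ω*(K.ρ*K.T)) 1 = 0 := K.br_one_right K.mωρT
@[simp] lemma r12 : K.br (K.ω*(K.ρ*(K.T*K.W))) 1 = 0 := K.br_one_right K.mωρTW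

@[simp] lemma TT : K.T * K.T = 0 := K.sq_zero K.T_mem
@[simp] lemma WW : K.W * K.W = 0 := K.sq_zero K.W_mem
@[simp] lemma ρρ : K.ρ * K.ρ = 0 := K.sq_zero K.ρ_mem
@[simp] lemma ωω : K.ω * K.ω = 0 := K.sq_zero K.ω_mem
@[simp] lemma TTc (c : F) : K.T * (K.T * c) = 0 := by rw [← mul_assoc, K.TT, zero_mul]
@[simp] lemma WWc (c : F) : K.W * (K.W * c) = 0 := by rw [← mul_assoc, K.WW, zero_mul]
@[simp] lemma ρρc (c : F) : K.ρ * (K.ρ * c) = 0 := by rw [← mul_assoc, K.ρρ, zero_mul]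
@[simp] lemma ωωc (c : F) : K.ω * (K.ω * c) = 0 := by rw [← mul_assoc, K.ωω, zero_mul]

@[simp] lemma ρω : K.ρ * K.ω = -(K.ω * K.ρ) := K.anticomm K.ρ_mem K.ω_mem
@[simp] lemma Tω : K.T * K.ω = -(K.ω * K.T) := K.anticomm K.T_mem K.ω_mem
@[simp] lemma Wω : K.W * K.ω = -(K.ω * K.W) := K.anticomm K.W_mem K.ω_mem
@[simp] lemma Tρ : K.T * K.ρ = -(K.ρ * K.T) := K.anticomm K.T_mem K.ρ_mem
@[simp] lemma Wρ : K.W * K.ρ = -(K.ρ * K.W) := K.anticomm K.W_mem K.ρ_mem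
@[simp] lemma WT : K.W * K.T = -(K.T * K.W) := K.anticomm K.W_mem K.T_mem
@[simp] lemma ρωc (c : F) : K.ρ * (K.ω * c) = -(K.ω * (K.ρ * c)) := by
  rw [← mul_assoc, K.ρω, neg_mul, mul_assoc]
@[simp] lemma Tωc (c : F) : K.T * (K.ω * c) = -(K.ω * (K.T * c)) := by
  rw [← mul_assoc, K.Tω, neg_mul, mul_assoc]
@[simp] lemma Wωc (c : F) : K.W * (K.ω * c) = -(K.ω * (K.W * c)) := by
  rw [← mul_assoc, K.Wω, neg_mul, mul_assoc]
@[simp] lemma Tρc (c : F) : K.T * (K.ρ * c) = -(K.ρ * (K.T * c)) := by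
  rw [← mul_assoc, K.Tρ, neg_mul, mul_assoc]
@[simp] lemma Wρc (c : F) : K.W * (K.ρ * c) = -(K.ρ * (K.W * c)) := by
  rw [← mul_assoc, K.Wρ, neg_mul, mul_assoc]
@[simp] lemma WTc (c : F) : K.W * (K.T * c) = -(K.T * (K.W * c)) := by
  rw [← mul_assoc, K.WT, neg_mul, mul_assoc]

@[simp] lemma br_ρ_T : K.br K.ρ K.T = (Complex.I/2) • K.ω := by
  rw [K.br_symm K.ρ_mem K.T_mem, K.br_T_ρ]; try module
@[simp] lemma br_W_T : K.br K.W K.T = 0 := by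
  rw [K.br_symm K.W_mem K.T_mem, K.br_T_W, smul_zero]
@[simp] lemma br_ω_T : K.br K.ω K.T = 0 := by
  rw [K.br_symm K.ω_mem K.T_mem, K.br_T_ω, smul_zero]
@[simp] lemma br_ρ_W : K.br K.ρ K.W = 0 := by
  rw [K.br_symm K.ρ_mem K.W_mem, K.br_W_ρ, smul_zero]
@[simp] lemma br_ω_W : K.br K.ω K.W = 0 := by
  rw [K.br_symm K.ω_mem K.W_mem, K.br_W_ω, smul_zero]
@[simp] lemma br_ω_ρ : K.br K.ω K.ρ = 0 := by
  rw [K.br_symm K.ω_mem K.ρ_mem, K.br_ρ_ω, smul_zero]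

attribute [simp] KodairaGA.br_T_ρ KodairaGA.br_T_T KodairaGA.br_T_W KodairaGA.br_T_ω
  KodairaGA.br_W_W KodairaGA.br_W_ρ KodairaGA.br_W_ω KodairaGA.br_ρ_ρ KodairaGA.br_ρ_ω
  KodairaGA.br_ω_ω

@[simp] lemma brR {g x : F} (hg : g ∈ K.gr 1) (hx : x ∈ K.gr 1) (c : F) :
    K.br g (x * c) = K.br g x * c + x * K.br g c := by
  rw [K.leibniz' c hg hx]; norm_num
@[simp] lemma brL1 {x c : F} (hx : x ∈ K.gr 1) (hc : c ∈ K.gr 1) (b : F) :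
    K.br (x * c) b = x * K.br c b - c * K.br x b := by
  rw [K.leibniz b hx hc]; norm_num; rw [sub_eq_add_neg]
@[simp] lemma brL2 {x c : F} (hx : x ∈ K.gr 1) (hc : c ∈ K.gr 2) (b : F) :
    K.br (x * c) b = x * K.br c b + c * K.br x b := by
  rw [K.leibniz b hx hc]; norm_num
@[simp] lemma brL3 {x c : F} (hx : x ∈ K.gr 1) (hc : c ∈ K.gr 3) (b : F) :
    K.br (x * c) b = x * K.br c b - c * K.br x b := by
  rw [K.leibniz b hx hc]; norm_num; rw [sub_eq_add_neg]

attribute [simp] smul_mul_assoc mul_smul_comm mul_assoc mul_add add_mul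

lemma e1 : K.br K.ρ (K.T * K.W) = -(K.D K.T) := by
  simp [K.D_T]; try module
lemma e2 : K.br (K.T * K.W) K.ρ = K.D K.T := by
  simp [K.D_T]; try module
lemma DTρ : K.D (K.T * K.ρ) = (Complex.I/2) • (K.ω * (K.ρ * K.W)) := by
  rw [K.D_mul K.ρ K.T_mem, K.D_T, K.D_ρ]; simp; try module
lemma e3 : K.br K.ρ (K.ρ * (K.T * K.W)) = -(K.D (K.T * K.ρ)) := by
  rw [K.DTρ]; simp; try module
lemma e4 : K.br (K.ρ * (K.T * K.W)) K.ρ = K.D (K.T * K.ρ) := by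
  rw [K.DTρ]; simp; try module

end KodairaGA

set_option maxHeartbeats 4000000 in
/-- The induced odd Lie superalgebra on the cohomology of the Kodaira surface DGA is
abelian: brackets of harmonic representatives are `∂̄`-exact; in particular
`[ρ̄, T∧W] = -∂̄T` and `[ρ̄, ρ̄∧T∧W] = -∂̄(T∧ρ̄)`, and all other brackets of listed
representatives vanish identically. -/
theorem stmt13 {F : Type*} [Ring F] [Algebra ℂ F] (K : KodairaGA F) :
    (∀ a ∈ reps K, ∀ b ∈ reps K, ∃ x : F, K.br a b = K.D x) ∧
    K.br K.ρ (K.T * K.W) = -(K.D K.T) ∧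
    K.br K.ρ (K.ρ * (K.T * K.W)) = -(K.D (K.T * K.ρ)) ∧
    (∀ a ∈ reps K, ∀ b ∈ reps K,
      ¬((a = K.ρ ∧ b = K.T * K.W) ∨ (a = K.T * K.W ∧ b = K.ρ) ∨
        (a = K.ρ ∧ b = K.ρ * (K.T * K.W)) ∨ (a = K.ρ * (K.T * K.W) ∧ b = K.ρ)) →
      K.br a b = 0) := by
  have hz : ∀ a ∈ reps K, ∀ b ∈ reps K,
      ¬((a = K.ρ ∧ b = K.T * K.W) ∨ (a = K.T * K.W ∧ b = K.ρ) ∨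
        (a = K.ρ ∧ b = K.ρ * (K.T * K.W)) ∨ (a = K.ρ * (K.T * K.W) ∧ b = K.ρ)) →
      K.br a b = 0 := by
    intro a ha b hb
    simp only [reps, List.mem_cons, List.not_mem_nil, or_false] at ha hb
    rcases ha with rfl|rfl|rfl|rfl|rfl|rfl|rfl|rfl|rfl|rfl|rfl|rfl <;>
      rcases hb with rfl|rfl|rfl|rfl|rfl|rfl|rfl|rfl|rfl|rfl|rfl|rfl <;>
      intro hne <;>
      first
        | (simp; done)
        | exact absurd (by tauto) hne
  refine ⟨?_, K.e1, K.e3, hz⟩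
  intro a ha b hb
  by_cases h1 : a = K.ρ ∧ b = K.T * K.W
  · obtain ⟨rfl, rfl⟩ := h1; exact ⟨-K.T, by rw [map_neg]; exact K.e1⟩
  by_cases h2 : a = K.T * K.W ∧ b = K.ρ
  · obtain ⟨rfl, rfl⟩ := h2; exact ⟨K.T, K.e2⟩
  by_cases h3 : a = K.ρ ∧ b = K.ρ * (K.T * K.W)
  · obtain ⟨rfl, rfl⟩ := h3; exact ⟨-(K.T * K.ρ), by rw [map_neg]; exact K.e3⟩
  by_cases h4 : a = K.ρ * (K.T * K.W) ∧ b = K.ρ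
  · obtain ⟨rfl, rfl⟩ := h4; exact ⟨K.T * K.ρ, K.e4⟩
  exact ⟨0, by rw [hz a ha b hb (by tauto), map_zero]⟩
end

section
/- In the case n=1 (Kodaira surface), for Γ₁ = t₁ ω̄∧ρ̄ + t₂ ρ̄∧W + t₃ ω̄∧T + t₄ T∧W with complex parameters t₁,…,t₄, the Maurer-Cartan equation holds exactly: ∂̄Γ₁ + (1/2)[Γ₁, Γ₁] = 0. -/
section Helpers

variable {F : Type*} [Ring F] [Algebra ℂ F] (K : KodairaGA F)

lemma KG.sq {a : F} (ha : a ∈ K.gr 1) : a * a = 0 := by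
  have h := K.gcomm ha ha
  norm_num at h
  have h2 : (2 : ℂ) • (a * a) = 0 := by
    rw [two_smul]
    nth_rewrite 1 [h]
    exact neg_add_cancel _
  have := smul_eq_zero.mp h2
  simpa using this

lemma KG.anti {a b : F} (ha : a ∈ K.gr 1) (hb : b ∈ K.gr 1) :
    a * b = -(b * a) := by
  have h := K.gcomm ha hb
  norm_num at h
  simpa using h

lemma KG.brsym {a b : F} (ha : a ∈ K.gr 1) (hb : b ∈ K.gr 1) :
    K.br a b = -(K.br b a) := by
  have h := K.br_symm ha hb
  norm_num at h
  simpa using h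

lemma KG.br_pair {a b c d : F} (ha : a ∈ K.gr 1) (hb : b ∈ K.gr 1)
    (hc : c ∈ K.gr 1) (hd : d ∈ K.gr 1) :
    K.br (a * b) (c * d)
      = (a * K.br b c - b * K.br a c) * d
        - c * (a * K.br b d - b * K.br a d) := by
  have hab : a * b ∈ K.gr 2 := K.mul_mem ha hb
  have h1 := K.leibniz' (a := a * b) (b := c) d hab hc
  have h2 := K.leibniz (a := a) (b := b) c ha hb
  have h3 := K.leibniz (a := a) (b := b) d ha hb
  norm_num at h1 h2 h3
  rw [h1, h2, h3]
  abel

lemma KG.br_ρ_T : K.br K.ρ K.T = (Complex.I/2) • K.ω := by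
  rw [KG.brsym K K.ρ_mem K.T_mem, K.br_T_ρ]
  rw [← neg_smul]; ring_nf

lemma KG.br_ω_T : K.br K.ω K.T = 0 := by
  rw [KG.brsym K K.ω_mem K.T_mem, K.br_T_ω, neg_zero]

lemma KG.br_W_T : K.br K.W K.T = 0 := by
  rw [KG.brsym K K.W_mem K.T_mem, K.br_T_W, neg_zero]

lemma KG.br_ω_ρ : K.br K.ω K.ρ = 0 := by
  rw [KG.brsym K K.ω_mem K.ρ_mem, K.br_ρ_ω, neg_zero]

lemma KG.br_ρ_W : K.br K.ρ K.W = 0 := by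
  rw [KG.brsym K K.ρ_mem K.W_mem, K.br_W_ρ, neg_zero]

lemma KG.br_ω_W : K.br K.ω K.W = 0 := by
  rw [KG.brsym K K.ω_mem K.W_mem, K.br_W_ω, neg_zero]

end Helpers

/-- For the Kodaira surface (`n = 1`) and
`Γ₁ = t₁ ω̄∧ρ̄ + t₂ ρ̄∧W + t₃ ω̄∧T + t₄ T∧W` with complex parameters `t₁,…,t₄`,
the Maurer-Cartan equation holds exactly: `∂̄Γ₁ + (1/2)[Γ₁, Γ₁] = 0`. -/
theorem stmt17 {F : Type*} [Ring F] [Algebra ℂ F] (K : KodairaGA F)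
    (t1 t2 t3 t4 : ℂ) (Γ₁ : F)
    (hΓ : Γ₁ = t1 • (K.ω * K.ρ) + t2 • (K.ρ * K.W) + t3 • (K.ω * K.T)
      + t4 • (K.T * K.W)) :
    K.D Γ₁ + (1/2 : ℂ) • K.br Γ₁ Γ₁ = 0 := by
  subst hΓ
  have hT := K.T_mem; have hW := K.W_mem; have hρ := K.ρ_mem; have hω := K.ω_mem
  have sqω : K.ω * K.ω = 0 := KG.sq K hω
  have sqW : K.W * K.W = 0 := KG.sq K hW
  have antiWω : K.W * K.ω = -(K.ω * K.W) := KG.anti K hW hω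
  -- the differential part vanishes
  have hD1 : K.D (K.ω * K.ρ) = 0 := by
    rw [K.D_mul _ hω, K.D_ω, K.D_ρ]; simp
  have hD2 : K.D (K.ρ * K.W) = 0 := by
    rw [K.D_mul _ hρ, K.D_ρ, K.D_W]; simp
  have hD3 : K.D (K.ω * K.T) = 0 := by
    rw [K.D_mul _ hω, K.D_ω, K.D_T]
    simp [mul_smul_comm, ← mul_assoc, sqω]
  have hD4 : K.D (K.T * K.W) = 0 := by
    rw [K.D_mul _ hT, K.D_T, K.D_W]
    simp [smul_mul_assoc, mul_assoc, sqW]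
  -- all pairwise brackets vanish
  have b11 : K.br (K.ω * K.ρ) (K.ω * K.ρ) = 0 := by
    rw [KG.br_pair K hω hρ hω hρ, K.br_ρ_ω, K.br_ω_ω, KG.br_ω_ρ K, K.br_ρ_ρ]; simp
  have b12 : K.br (K.ω * K.ρ) (K.ρ * K.W) = 0 := by
    rw [KG.br_pair K hω hρ hρ hW, K.br_ρ_ρ, KG.br_ω_ρ K, KG.br_ρ_W K, KG.br_ω_W K]; simp
  have b13 : K.br (K.ω * K.ρ) (K.ω * K.T) = 0 := by
    rw [KG.br_pair K hω hρ hω hT, K.br_ρ_ω, K.br_ω_ω, KG.br_ρ_T K, KG.br_ω_T K]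
    simp [mul_smul_comm, smul_mul_assoc, ← mul_assoc, sqω]
  have b14 : K.br (K.ω * K.ρ) (K.T * K.W) = 0 := by
    rw [KG.br_pair K hω hρ hT hW, KG.br_ρ_T K, KG.br_ω_T K, KG.br_ρ_W K, KG.br_ω_W K]
    simp [mul_smul_comm, smul_mul_assoc, ← mul_assoc, sqω]
  have b22 : K.br (K.ρ * K.W) (K.ρ * K.W) = 0 := by
    rw [KG.br_pair K hρ hW hρ hW, K.br_W_ρ, K.br_ρ_ρ, K.br_W_W, KG.br_ρ_W K]; simp
  have k1 : K.ω * (K.W * K.ω) = 0 := by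
    rw [antiWω]; simp [← mul_assoc, sqω]
  have k2 : K.W * K.ω * K.W = 0 := by
    rw [antiWω]; simp [mul_assoc, sqW]
  have b23 : K.br (K.ρ * K.W) (K.ω * K.T) = 0 := by
    rw [KG.br_pair K hρ hW hω hT, K.br_W_ω, K.br_ρ_ω, KG.br_W_T K, KG.br_ρ_T K]
    simp [mul_smul_comm, smul_mul_assoc, k1, k2]
  have b24 : K.br (K.ρ * K.W) (K.T * K.W) = 0 := by
    rw [KG.br_pair K hρ hW hT hW, KG.br_W_T K, KG.br_ρ_T K, K.br_W_W, KG.br_ρ_W K]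
    simp [mul_smul_comm, smul_mul_assoc, k1, k2]
  have b33 : K.br (K.ω * K.T) (K.ω * K.T) = 0 := by
    rw [KG.br_pair K hω hT hω hT, K.br_T_ω, K.br_ω_ω, K.br_T_T, KG.br_ω_T K]; simp
  have b34 : K.br (K.ω * K.T) (K.T * K.W) = 0 := by
    rw [KG.br_pair K hω hT hT hW, K.br_T_T, KG.br_ω_T K, K.br_T_W, KG.br_ω_W K]; simp
  have b44 : K.br (K.T * K.W) (K.T * K.W) = 0 := by
    rw [KG.br_pair K hT hW hT hW, KG.br_W_T K, K.br_T_T, K.br_W_W, K.br_T_W]; simp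
  -- symmetric zeros (degree-2 bracket is symmetric)
  have sym : ∀ x y : F, x ∈ K.gr 2 → y ∈ K.gr 2 → K.br x y = K.br y x := by
    intro x y hx hy
    have h := K.br_symm hx hy
    norm_num at h
    exact h
  have b21 : K.br (K.ρ * K.W) (K.ω * K.ρ) = 0 := by
    rw [sym _ _ (K.mul_mem hρ hW) (K.mul_mem hω hρ), b12]
  have b31 : K.br (K.ω * K.T) (K.ω * K.ρ) = 0 := by
    rw [sym _ _ (K.mul_mem hω hT) (K.mul_mem hω hρ), b13]
  have b41 : K.br (K.T * K.W) (K.ω * K.ρ) = 0 := by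
    rw [sym _ _ (K.mul_mem hT hW) (K.mul_mem hω hρ), b14]
  have b32 : K.br (K.ω * K.T) (K.ρ * K.W) = 0 := by
    rw [sym _ _ (K.mul_mem hω hT) (K.mul_mem hρ hW), b23]
  have b42 : K.br (K.T * K.W) (K.ρ * K.W) = 0 := by
    rw [sym _ _ (K.mul_mem hT hW) (K.mul_mem hρ hW), b24]
  have b43 : K.br (K.T * K.W) (K.ω * K.T) = 0 := by
    rw [sym _ _ (K.mul_mem hT hW) (K.mul_mem hω hT), b34]
  simp [map_add, map_smul, LinearMap.add_apply, LinearMap.smul_apply,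
    hD1, hD2, hD3, hD4, b11, b12, b13, b14, b21, b22, b23, b24,
    b31, b32, b33, b34, b41, b42, b43, b44]
end

section
/- Let Ω = u₁(α∧γ - β∧δ) + v₁(α∧δ + β∧γ) + u₂(α∧γ + β∧δ) + v₂(α∧δ - β∧γ) on the 4-dimensional Kodaira Lie algebra g with dual basis α, β, γ, δ of X, Y, U, V, where dγ = -α∧β and dα = dβ = dδ = 0. If Δ := u₁² + v₁² - u₂² - v₂² ≠ 0, then Ω is a closed nondegenerate 2-form on g, i.e. dΩ = 0 and Ω∧Ω ≠ 0. -/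
noncomputable section

open ExteriorAlgebra

/-- The exterior algebra of the dual of the 4-dimensional Kodaira Lie algebra,
with degree-one generators `α, β, γ, δ` dual to `X, Y, U, V`. -/
abbrev LamR : Type := ExteriorAlgebra ℝ (Fin 4 → ℝ)

/-- The four degree-one generators. -/
def genR (k : Fin 4) : LamR := ExteriorAlgebra.ι ℝ (Pi.single k (1 : ℝ))

lemma gen_sq (i : Fin 4) : genR i * genR i = 0 := ι_sq_zero _

lemma gen_swap (i j : Fin 4) : genR j * genR i = -(genR i * genR j) :=
  eq_neg_of_add_eq_zero_left (ι_add_mul_swap _ _)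

lemma gen_swap' (i j : Fin 4) (x : LamR) :
    genR j * (genR i * x) = -(genR i * (genR j * x)) := by
  rw [← mul_assoc, gen_swap, neg_mul, mul_assoc]

lemma gen_sq' (i : Fin 4) (x : LamR) : genR i * (genR i * x) = 0 := by
  rw [← mul_assoc, gen_sq, zero_mul]

lemma top_ne_zero : genR 0 * genR 1 * genR 2 * genR 3 ≠ 0 := by
  intro h
  have h2 : genR 0 * genR 1 * genR 2 * genR 3
      = ιMulti ℝ 4 ![Pi.single 0 1, Pi.single 1 1, Pi.single 2 1, Pi.single 3 1] := by
    simp [ιMulti_apply, List.ofFn_succ, genR, mul_assoc]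
  set f : ∀ i, (Fin 4 → ℝ) [⋀^Fin i]→ₗ[ℝ] ℝ := fun i =>
    match i with
    | 4 => Matrix.detRowAlternating
    | _ => 0 with hf
  have h3 := congrArg (liftAlternating f) h
  rw [h2, liftAlternating_apply_ιMulti, map_zero] at h3
  have h4 : (Matrix.of ![Pi.single 0 1, Pi.single 1 1, Pi.single 2 1, Pi.single 3 1]
      : Matrix (Fin 4) (Fin 4) ℝ).det = 0 := h3
  have hm : (Matrix.of ![Pi.single 0 1, Pi.single 1 1, Pi.single 2 1, Pi.single 3 1]
      : Matrix (Fin 4) (Fin 4) ℝ) = 1 := by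
    ext i j
    fin_cases i <;> fin_cases j <;>
      simp [Pi.single_apply, Matrix.one_apply, Matrix.vecHead, Matrix.vecTail]
  rw [hm, Matrix.det_one] at h4
  exact one_ne_zero h4

/-- Let `Ω = u₁(α∧γ - β∧δ) + v₁(α∧δ + β∧γ) + u₂(α∧γ + β∧δ) + v₂(α∧δ - β∧γ)` on the
4-dimensional Kodaira Lie algebra, where the Chevalley-Eilenberg differential `d`
satisfies `dα = dβ = dδ = 0` and `dγ = -α∧β`.  If `Δ = u₁² + v₁² - u₂² - v₂² ≠ 0`,
then `Ω` is a closed nondegenerate 2-form: `dΩ = 0` and `Ω∧Ω ≠ 0`. -/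
theorem stmt18 (d : LamR →ₗ[ℝ] LamR)
    (α β γ δ : LamR)
    (hα : α = genR 0) (hβ : β = genR 1) (hγ : γ = genR 2) (hδ : δ = genR 3)
    (hdα : d α = 0) (hdβ : d β = 0) (hdδ : d δ = 0)
    (hdγ : d γ = -(α * β)) (hd1 : d 1 = 0)
    (hder : ∀ (v : Fin 4 → ℝ) (y : LamR),
      d (ExteriorAlgebra.ι ℝ v * y) = d (ExteriorAlgebra.ι ℝ v) * y
        - ExteriorAlgebra.ι ℝ v * d y)
    (u1 v1 u2 v2 : ℝ)
    (hΔ : u1 ^ 2 + v1 ^ 2 - u2 ^ 2 - v2 ^ 2 ≠ 0)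
    (Ω : LamR)
    (hΩ : Ω = u1 • (α * γ - β * δ) + v1 • (α * δ + β * γ)
      + u2 • (α * γ + β * δ) + v2 • (α * δ - β * γ)) :
    d Ω = 0 ∧ Ω * Ω ≠ 0 := by
  have hder' : ∀ (i : Fin 4) (y : LamR),
      d (genR i * y) = d (genR i) * y - genR i * d y := fun i y => hder _ y
  subst hα hβ hγ hδ hΩ
  constructor
  · simp only [map_add, map_smul, map_sub, hder', hdα, hdβ, hdδ, hdγ]
    have e1 : genR 0 * -(genR 0 * genR 1) = 0 := by rw [mul_neg, gen_sq', neg_zero]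
    have e2 : genR 1 * -(genR 0 * genR 1) = 0 := by
      rw [mul_neg, gen_swap' 0 1]; simp [gen_sq]
    simp [e1, e2]
  · have hprod : ((u1 • (genR 0 * genR 2 - genR 1 * genR 3)
        + v1 • (genR 0 * genR 3 + genR 1 * genR 2)
        + u2 • (genR 0 * genR 2 + genR 1 * genR 3)
        + v2 • (genR 0 * genR 3 - genR 1 * genR 2)) : LamR)
          * (u1 • (genR 0 * genR 2 - genR 1 * genR 3)
        + v1 • (genR 0 * genR 3 + genR 1 * genR 2)
        + u2 • (genR 0 * genR 2 + genR 1 * genR 3)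
        + v2 • (genR 0 * genR 3 - genR 1 * genR 2))
        = (2 * (u1 ^ 2 + v1 ^ 2 - u2 ^ 2 - v2 ^ 2)) •
          (genR 0 * (genR 1 * (genR 2 * genR 3))) := by
      simp only [mul_add, add_mul, mul_sub, sub_mul, smul_mul_assoc, mul_smul_comm,
        smul_smul, mul_assoc, gen_swap' 0 1, gen_swap' 0 2, gen_swap' 0 3,
        gen_swap' 1 2, gen_swap' 1 3, gen_swap' 2 3,
        gen_swap 0 1, gen_swap 0 2, gen_swap 0 3, gen_swap 1 2, gen_swap 1 3, gen_swap 2 3,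
        gen_sq' 0, gen_sq' 1, gen_sq' 2, gen_sq' 3, gen_sq,
        mul_neg, neg_mul, neg_neg, mul_zero, zero_mul, smul_zero, smul_neg,
        add_zero, zero_add, sub_zero, zero_sub, neg_zero]
      match_scalars <;> ring
    rw [hprod]
    intro h
    rcases smul_eq_zero.mp h with h' | h'
    · exact hΔ (by linarith)
    · exact top_ne_zero (by rw [mul_assoc, mul_assoc]; exact h')

end
end
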